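/- There exist a complex number ξ ∈ ℂ such that 1, ξ and ξ² are linearly independent over ℚ(√−5), and a constant c > 0 such that, for every sufficiently large real number X, there is a nonzero triple (x₀, x₁, x₂) ∈ ℤ[√−5]³ with |x₀| ≤ X and max{|x₀ξ − x₁|, |x₀ξ² − x₂|} ≤ c·X^{−1/γ}. -/

import Mathlib

/-!
The number `ξ` is one of Roy's extremal numbers. Symmetric integer matrices
`W n = !![a n, b n; b n, c n]` with `W (n + 2) = W (n + 1) * S (n + 1) * W n`, where `S n`
alternates between the unimodular `seed` and `seedᵀ`, have determinant `±1` and satisfy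
`a (n + 2) ≍ a (n + 1) * a n`, hence `a (n + 1) ^ (1 / φ) ≤ 7 ^ φ * a n`. The columns of `W (n + 2)`
are nonnegative combinations of those of `W (n + 1)`, so the intervals between `b / a` and
`c / b` are nested; they have length `1 / (a * b)`, and a common point `ξ` satisfies
`|a ξ - b|, |a ξ² - c| ≪ 1 / a`. Taking `a n ≤ X < a (n + 1)` gives the exponent `1 / φ`.
An integer relation among `1, ξ, ξ²` would be satisfied by `(a n, b n, c n)` for all large `n`,
which is impossible since three consecutive triples form a unimodular matrix. As `ξ` is real,
independence over `ℚ` gives independence over the imaginary quadratic field `ℚ(√-5)` by taking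
real and imaginary parts, and the approximations found lie in `ℤ ⊆ ℤ[√-5]`.
-/

open Complex IntermediateField

/-- The embedding of `ℤ[√-5]` into `ℂ`, sending `m + n√-5` to `m + n·√5·i`. -/
noncomputable def zsqrtd5ToComplex (z : ℤ√(-5)) : ℂ :=
  (z.re : ℂ) + (z.im : ℂ) * (Real.sqrt 5 * Complex.I)

open Matrix Set
open scoped goldenRatio

theorem Matrix.mul_self_eq_trace_smul_sub_det_smul {R : Type*} [CommRing R]
    (A : Matrix (Fin 2) (Fin 2) R) :
    A * A = A.trace • A - A.det • (1 : Matrix (Fin 2) (Fin 2) R) := by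
  ext i j
  fin_cases i <;> fin_cases j <;>
    simp only [Fin.zero_eta, Fin.mk_one, Fin.isValue, mul_apply, Fin.sum_univ_two, trace_fin_two,
      det_fin_two, sub_apply, smul_apply, smul_eq_mul, one_apply_eq, one_apply_ne, ne_eq,
      zero_ne_one, one_ne_zero, not_false_eq_true, mul_zero, mul_one, sub_zero] <;> ring

theorem Matrix.mul_apply_nonneg {l m n R : Type*} [Fintype m] [Semiring R] [PartialOrder R]
    [IsOrderedRing R] {A : Matrix l m R} {B : Matrix m n R} (hA : ∀ i j, 0 ≤ A i j)
    (hB : ∀ i j, 0 ≤ B i j) (i : l) (j : n) : 0 ≤ (A * B) i j := by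
  rw [mul_apply]
  exact Finset.sum_nonneg fun k _ => mul_nonneg (hA i k) (hB k j)

lemma mem_uIcc_of_sub_mul_sub_nonpos {α : Type*} [CommRing α] [LinearOrder α]
    [IsStrictOrderedRing α] {x p q : α} (h : (x - p) * (x - q) ≤ 0) : x ∈ uIcc p q := by
  rcases le_total p q with hpq | hpq
  · rw [uIcc_of_le hpq]; constructor <;> nlinarith
  · rw [uIcc_of_ge hpq]; constructor <;> nlinarith

lemma div_mem_uIcc_of_nonneg_comb {α : Type*} [Field α] [LinearOrder α] [IsStrictOrderedRing α]
    {p q r s u v : α} (hp : 0 < p) (hr : 0 < r) (hu : 0 ≤ u)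
    (hv : 0 ≤ v) (hx : 0 < p * u + r * v) :
    (q * u + s * v) / (p * u + r * v) ∈ uIcc (q / p) (s / r) := by
  apply mem_uIcc_of_sub_mul_sub_nonpos
  have hx₀ := hx.ne'
  have h₁ : (q * u + s * v) / (p * u + r * v) - q / p =
      v * (p * s - q * r) / (p * (p * u + r * v)) := by
    rw [div_sub_div _ _ hx₀ hp.ne', div_eq_div_iff (by positivity) (by positivity)]
    ring
  have h₂ : (q * u + s * v) / (p * u + r * v) - s / r =
      -(u * (p * s - q * r)) / (r * (p * u + r * v)) := by
    rw [div_sub_div _ _ hx₀ hr.ne', div_eq_div_iff (by positivity) (by positivity)]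
    ring
  rw [h₁, h₂, div_mul_div_comm]
  apply div_nonpos_of_nonpos_of_nonneg _ (by positivity)
  nlinarith [mul_nonneg (mul_nonneg hu hv) (sq_nonneg (p * s - q * r))]

/-- `u (k + 1) - φ * u k` is multiplied by `ψ = 1 - φ`, with `|ψ| = φ - 1 < 1`, up to an error
`≤ C` at each step, and `C * φ ^ 2` is the fixed point of this contraction. -/
lemma abs_sub_goldenRatio_mul_le {u : ℕ → ℝ} {C : ℝ} (h₀ : |u 1 - φ * u 0| ≤ C * φ ^ 2)
    (h : ∀ k, |u (k + 2) - u (k + 1) - u k| ≤ C) (k : ℕ) :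
    |u (k + 1) - φ * u k| ≤ C * φ ^ 2 := by
  induction k with
  | zero => exact h₀
  | succ k ih =>
    have hψ : |ψ| = φ - 1 := by
      rw [abs_of_neg Real.goldenConj_neg, ← Real.one_sub_goldenConj]; ring
    calc |u (k + 2) - φ * u (k + 1)|
        = |ψ * (u (k + 1) - φ * u k) + (u (k + 2) - u (k + 1) - u k)| := by
          congr 1
          linear_combination (-u (k + 1)) * Real.goldenRatio_add_goldenConj +
            u k * Real.goldenConj_mul_goldenRatio
      _ ≤ (φ - 1) * (C * φ ^ 2) + C := by
          grw [abs_add_le, abs_mul, hψ, ih, h k]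
          linarith [Real.one_lt_goldenRatio]
      _ = C * φ ^ 2 := by linear_combination (C * φ - C) * Real.goldenRatio_sq

lemma exists_le_lt_succ {α : Type*} [LinearOrder α] {f : ℕ → α} {X : α} (h₀ : f 0 ≤ X)
    (h : ∃ m, X < f m) :
    ∃ n, f n ≤ X ∧ X < f (n + 1) := by
  by_contra! H
  obtain ⟨m, hm⟩ := h
  have hle (n : ℕ) : f n ≤ X := by
    induction n with
    | zero => exact h₀
    | succ n ih => exact H n ih
  exact (hle m).not_gt hm

namespace RoyExtremal

def seed : Matrix (Fin 2) (Fin 2) ℤ := !![3, 1; 2, 1]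

def S (n : ℕ) : Matrix (Fin 2) (Fin 2) ℤ := if Even n then seed else seedᵀ

/-- The alternation of `seed` and `seedᵀ` is what keeps every `W n` symmetric. -/
def W : ℕ → Matrix (Fin 2) (Fin 2) ℤ
  | 0 => 1
  | 1 => !![1, 1; 1, 0]
  | n + 2 => W (n + 1) * S (n + 1) * W n

lemma S_add_two (n : ℕ) : S (n + 2) = S n := by
  simp [S, Nat.even_add_one]

lemma S_transpose (n : ℕ) : (S n)ᵀ = S (n + 1) := by
  by_cases h : Even n <;> simp [S, h, Nat.even_add_one]

lemma det_S (n : ℕ) : (S n).det = 1 := by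
  by_cases h : Even n <;> simp [S, h, seed, Matrix.det_fin_two_of]

lemma S_apply_nonneg (n : ℕ) (i j : Fin 2) : 0 ≤ S n i j := by
  by_cases h : Even n <;> fin_cases i <;> fin_cases j <;> simp [S, h, seed]

lemma S_zero_zero (n : ℕ) : S n 0 0 = 3 := by
  by_cases h : Even n <;> simp [S, h, seed]

lemma one_le_S_zero_one (n : ℕ) : 1 ≤ S n 0 1 := by
  by_cases h : Even n <;> simp [S, h, seed]

lemma sum_S (n : ℕ) : ∑ i, ∑ j, S n i j = 7 := by
  by_cases h : Even n <;> simp [S, h, seed, Fin.sum_univ_two]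

lemma W_add_two (n : ℕ) : W (n + 2) = W (n + 1) * S (n + 1) * W n := rfl

lemma W_add_two' (n : ℕ) : W (n + 2) = W n * S (n + 2) * W (n + 1) := by
  induction n with
  | zero => decide
  | succ n ih =>
    calc W (n + 2) * S (n + 2) * W (n + 1)
        = W (n + 1) * S (n + 1) * (W n * S (n + 2) * W (n + 1)) := by
          rw [W_add_two]; simp only [Matrix.mul_assoc]
      _ = W (n + 1) * S (n + 3) * W (n + 2) := by rw [← ih, S_add_two]

lemma W_transpose (n : ℕ) : (W n)ᵀ = W n := by
  induction n using Nat.twoStepInduction with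
  | zero => simp [W]
  | one => decide
  | more n ih₀ ih₁ =>
    rw [W_add_two, transpose_mul, transpose_mul, ih₀, ih₁, S_transpose, ← Matrix.mul_assoc,
      ← W_add_two', W_add_two]

lemma isUnit_det_W (n : ℕ) : IsUnit (W n).det := by
  induction n using Nat.twoStepInduction with
  | zero => simp [W]
  | one => decide
  | more n ih₀ ih₁ => simpa [W_add_two, det_S] using ih₁.mul ih₀

lemma W_add_three (n : ℕ) :
    W (n + 3) = (W (n + 1) * S (n + 1)).trace • W (n + 2) - (W (n + 1)).det • W n := by
  have hdet : (W (n + 1) * S (n + 1)).det = (W (n + 1)).det := by simp [det_S]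
  set Y := W (n + 1) * S (n + 1)
  calc W (n + 3) = Y * Y * W n := by
        rw [W_add_two' (n + 1), S_add_two, W_add_two]; simp only [Y, Matrix.mul_assoc]
    _ = Y.trace • (Y * W n) - Y.det • W n := by
        rw [mul_self_eq_trace_smul_sub_det_smul, Matrix.sub_mul, smul_mul, smul_mul, one_mul]
    _ = _ := by rw [hdet, W_add_two]

lemma W_apply_nonneg (n : ℕ) (i j : Fin 2) : 0 ≤ W n i j := by
  induction n using Nat.twoStepInduction generalizing i j with
  | zero => fin_cases i <;> fin_cases j <;> simp [W]
  | one => fin_cases i <;> fin_cases j <;> simp [W]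
  | more n ih₀ ih₁ =>
    exact mul_apply_nonneg (mul_apply_nonneg ih₁ (S_apply_nonneg _)) ih₀ i j

lemma S_mul_W_apply_nonneg (m n : ℕ) (i j : Fin 2) : 0 ≤ (S m * W n) i j :=
  mul_apply_nonneg (S_apply_nonneg m) (W_apply_nonneg n) i j

lemma S_mul_W_zero_apply (m n : ℕ) (j : Fin 2) :
    (S m * W n) 0 j = 3 * W n 0 j + S m 0 1 * W n 1 j := by
  rw [Matrix.mul_apply, Fin.sum_univ_two, S_zero_zero]

/-- Each column of `W (n + 2)` is a nonnegative combination of the columns of `W (n + 1)`. -/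
lemma W_add_two_apply (n : ℕ) (i j : Fin 2) : W (n + 2) i j =
    W (n + 1) i 0 * (S (n + 1) * W n) 0 j + W (n + 1) i 1 * (S (n + 1) * W n) 1 j := by
  rw [W_add_two, Matrix.mul_assoc, Matrix.mul_apply, Fin.sum_univ_two]

def a (n : ℕ) : ℤ := W n 0 0
def b (n : ℕ) : ℤ := W n 0 1
def c (n : ℕ) : ℤ := W n 1 1

lemma W_one_zero (n : ℕ) : W n 1 0 = b n := by
  rw [b, ← transpose_apply (W n), W_transpose]

lemma three_mul_le_a_add_two (n : ℕ) : 3 * (a (n + 1) * a n) ≤ a (n + 2) := by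
  have h₁ := mul_nonneg (W_apply_nonneg (n + 1) 0 1) (S_mul_W_apply_nonneg (n + 1) n 1 0)
  have h₂ := mul_nonneg (S_apply_nonneg (n + 1) 0 1) (W_apply_nonneg n 1 0)
  have h₃ := W_apply_nonneg (n + 1) 0 0
  rw [a, a, a, W_add_two_apply, S_mul_W_zero_apply]
  nlinarith

lemma one_le_a (n : ℕ) : 1 ≤ a n := by
  induction n using Nat.twoStepInduction with
  | zero => decide
  | one => decide
  | more n ih₀ ih₁ => nlinarith [three_mul_le_a_add_two n]

lemma le_a (n : ℕ) : (n : ℤ) ≤ a n := by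
  induction n using Nat.twoStepInduction with
  | zero => simpa using (one_le_a 0).trans' zero_le_one
  | one => exact one_le_a 1
  | more n _ ih₁ =>
    have := three_mul_le_a_add_two n
    have := one_le_a n
    push_cast at ih₁ ⊢
    nlinarith

lemma b_add_c_le_b_add_two (n : ℕ) : b n + c n ≤ b (n + 2) := by
  have hT := S_mul_W_apply_nonneg (n + 1) n
  calc b n + c n ≤ (S (n + 1) * W n) 0 1 := by
        have := one_le_S_zero_one (n + 1)
        have := W_apply_nonneg n 1 1
        rw [S_mul_W_zero_apply, b, c]
        nlinarith [W_apply_nonneg n 0 1]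
    _ ≤ a (n + 1) * (S (n + 1) * W n) 0 1 := le_mul_of_one_le_left (hT 0 1) (one_le_a _)
    _ ≤ b (n + 2) := by
        rw [b, W_add_two_apply, ← a]
        nlinarith [W_apply_nonneg (n + 1) 0 1, hT 1 1]

lemma one_le_b_add_c (n : ℕ) : 1 ≤ b n + c n := by
  induction n using Nat.twoStepInduction with
  | zero => decide
  | one => decide
  | more n ih₀ _ =>
    have hc : 0 ≤ c (n + 2) := W_apply_nonneg _ 1 1
    linarith [b_add_c_le_b_add_two n]

lemma one_le_b (n : ℕ) : 1 ≤ b (n + 1) := by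
  cases n with
  | zero => decide
  | succ n => exact (one_le_b_add_c n).trans (b_add_c_le_b_add_two n)

lemma a_pos (n : ℕ) : (0 : ℝ) < a n := by exact_mod_cast (one_le_a n).trans_lt' zero_lt_one

lemma b_pos (n : ℕ) : (0 : ℝ) < b (n + 1) := by
  exact_mod_cast (one_le_b n).trans_lt' zero_lt_one

lemma W_add_three_apply (n : ℕ) (i j : Fin 2) : W (n + 3) i j =
    (W (n + 1) * S (n + 1)).trace * W (n + 2) i j - (W (n + 1)).det * W n i j := by
  rw [W_add_three]; rfl

def triples (n : ℕ) : Matrix (Fin 3) (Fin 3) ℤ :=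
  !![a n, b n, c n; a (n + 1), b (n + 1), c (n + 1); a (n + 2), b (n + 2), c (n + 2)]

lemma det_triples_succ (n : ℕ) :
    (triples (n + 1)).det = -(W (n + 1)).det * (triples n).det := by
  have ha : a (n + 3) = _ := W_add_three_apply n 0 0
  have hb : b (n + 3) = _ := W_add_three_apply n 0 1
  have hc : c (n + 3) = _ := W_add_three_apply n 1 1
  simp only [triples, det_fin_three, of_apply, cons_val', cons_val_zero, cons_val_one,
    cons_val_two, empty_val', cons_val_fin_one, head_cons, tail_cons, head_fin_const]
  rw [ha, hb, hc]
  simp only [a, b, c]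
  ring

lemma isUnit_det_triples (n : ℕ) : IsUnit (triples n).det := by
  induction n with
  | zero => decide
  | succ n ih => simpa [det_triples_succ] using ((isUnit_det_W (n + 1)).neg).mul ih

def I (n : ℕ) : Set ℝ := uIcc ((b n : ℝ) / a n) ((c n : ℝ) / b n)

lemma div_W_add_two_mem_I (n : ℕ) (j : Fin 2) :
    (W (n + 2) 1 j : ℝ) / W (n + 2) 0 j ∈ I (n + 1) := by
  have hpos : (0 : ℝ) < W (n + 2) 0 j := by
    fin_cases j
    · exact a_pos (n + 2)
    · exact b_pos (n + 1)
  simp only [W_add_two_apply] at hpos ⊢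
  push_cast at hpos ⊢
  rw [W_one_zero]
  exact div_mem_uIcc_of_nonneg_comb (a_pos (n + 1)) (b_pos n)
    (by exact_mod_cast S_mul_W_apply_nonneg _ _ _ _) (by exact_mod_cast S_mul_W_apply_nonneg _ _ _ _)
    hpos

lemma I_add_two_subset (n : ℕ) : I (n + 2) ⊆ I (n + 1) := by
  have h₀ := div_W_add_two_mem_I n 0
  have h₁ := div_W_add_two_mem_I n 1
  rw [W_one_zero] at h₀
  exact uIcc_subset_uIcc h₀ h₁

lemma I_subset {m n : ℕ} (h : m ≤ n) : I (n + 1) ⊆ I (m + 1) :=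
  antitone_nat_of_succ_le (f := fun k => I (k + 1)) I_add_two_subset h

lemma exists_forall_mem_I : ∃ ξ : ℝ, ∀ n, ξ ∈ I (n + 1) := by
  obtain ⟨ξ, hξ⟩ := IsCompact.nonempty_iInter_of_sequence_nonempty_isCompact_isClosed
    (fun k => I (k + 1)) I_add_two_subset (fun _ => nonempty_uIcc) isCompact_uIcc
    (fun _ => isCompact_uIcc.isClosed)
  exact ⟨ξ, mem_iInter.1 hξ⟩

lemma b_div_a_mem_I_one (n : ℕ) : ((b (n + 1) : ℝ) / a (n + 1)) ∈ I 1 :=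
  I_subset n.zero_le left_mem_uIcc

lemma c_div_b_mem_I_one (n : ℕ) : ((c (n + 1) : ℝ) / b (n + 1)) ∈ I 1 :=
  I_subset n.zero_le right_mem_uIcc

lemma I_one : I 1 = Icc 0 1 := by
  simp [I, a, b, c, W, uIcc_of_ge]

lemma b_le_a (n : ℕ) : b (n + 1) ≤ a (n + 1) := by
  have h := b_div_a_mem_I_one n
  rw [I_one, mem_Icc, div_le_one (a_pos _)] at h
  exact_mod_cast h.2

lemma c_le_b (n : ℕ) : c (n + 1) ≤ b (n + 1) := by
  have h := c_div_b_mem_I_one n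
  rw [I_one, mem_Icc, div_le_one (b_pos _)] at h
  exact_mod_cast h.2

lemma W_apply_le_a (n : ℕ) (i j : Fin 2) : W n i j ≤ a n := by
  cases n with
  | zero => fin_cases i <;> fin_cases j <;> decide
  | succ n =>
    fin_cases i <;> fin_cases j
    · exact le_rfl
    · exact b_le_a n
    · exact (W_one_zero _).trans_le (b_le_a n)
    · exact (c_le_b n).trans (b_le_a n)

lemma a_le_two_mul_b (n : ℕ) : a (n + 1) ≤ 2 * b (n + 1) := by
  cases n with
  | zero => decide
  | succ n =>
    have h : ((b (n + 2) : ℝ) / a (n + 2)) ∈ I 2 :=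
      I_subset (m := 1) (n := n + 1) (by omega) left_mem_uIcc
    have ha := a_pos (n + 2)
    have hI : I 2 = uIcc (3 / 4) (2 / 3) := by
      have : W 2 = !![4, 3; 3, 2] := by decide
      simp only [I, a, b, c, this]
      norm_num
    rw [hI, uIcc_of_ge (by norm_num), mem_Icc, le_div_iff₀ ha] at h
    exact_mod_cast (by linarith : (a (n + 2) : ℝ) ≤ 2 * b (n + 2))

lemma a_add_two_le (n : ℕ) : a (n + 2) ≤ 7 * (a (n + 1) * a n) := by
  have hW := W_apply_nonneg
  have hS := S_apply_nonneg (n + 1)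
  have hle := W_apply_le_a
  calc a (n + 2) = W (n + 1) 0 0 * (S (n + 1) 0 0 * W n 0 0 + S (n + 1) 0 1 * W n 1 0) +
        W (n + 1) 0 1 * (S (n + 1) 1 0 * W n 0 0 + S (n + 1) 1 1 * W n 1 0) := by
        simp only [a, W_add_two_apply, Matrix.mul_apply, Fin.sum_univ_two]
    _ ≤ a (n + 1) * (S (n + 1) 0 0 * a n + S (n + 1) 0 1 * a n) +
        a (n + 1) * (S (n + 1) 1 0 * a n + S (n + 1) 1 1 * a n) := by
        gcongr <;> first
          | apply hle
          | apply hS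
          | exact (one_le_a _).trans' zero_le_one
          | exact add_nonneg (mul_nonneg (hS _ _) (hW _ _ _)) (mul_nonneg (hS _ _) (hW _ _ _))
    _ = (∑ i, ∑ j, S (n + 1) i j) * (a (n + 1) * a n) := by
        simp only [Fin.sum_univ_two]; ring
    _ = 7 * (a (n + 1) * a n) := by rw [sum_S]

lemma det_W (n : ℕ) : (W n).det = a n * c n - b n * b n := by
  rw [det_fin_two, W_one_zero]; rfl

lemma abs_sub_le_of_mem_I {n : ℕ} {x y : ℝ} (hx : x ∈ I (n + 1)) (hy : y ∈ I (n + 1)) :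
    |x - y| ≤ 1 / (a (n + 1) * b (n + 1)) := by
  have ha := a_pos (n + 1)
  have hb := b_pos n
  have hdet : |((a (n + 1) * c (n + 1) - b (n + 1) * b (n + 1) : ℤ) : ℝ)| = 1 := by
    rw [← det_W]; exact_mod_cast Int.isUnit_iff_abs_eq.1 (isUnit_det_W _)
  have hwidth : (b (n + 1) : ℝ) / a (n + 1) - c (n + 1) / b (n + 1) =
      -((a (n + 1) * c (n + 1) - b (n + 1) * b (n + 1) : ℤ) : ℝ) / (a (n + 1) * b (n + 1)) := by
    push_cast
    field_simp
    ring
  calc |x - y| ≤ |(b (n + 1) : ℝ) / a (n + 1) - c (n + 1) / b (n + 1)| :=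
        Real.dist_le_of_mem_uIcc hx hy
    _ = 1 / (a (n + 1) * b (n + 1)) := by
        rw [hwidth, abs_div, abs_neg, hdet, abs_of_pos (by positivity)]

lemma abs_log_a_add_two_sub_le (k : ℕ) :
    |Real.log (a (k + 2)) - Real.log (a (k + 1)) - Real.log (a k)| ≤ Real.log 7 := by
  have hlo : (3 : ℝ) * (a (k + 1) * a k) ≤ a (k + 2) := by
    exact_mod_cast three_mul_le_a_add_two k
  have hhi : (a (k + 2) : ℝ) ≤ 7 * (a (k + 1) * a k) := by exact_mod_cast a_add_two_le k
  have hpos := mul_pos (a_pos (k + 1)) (a_pos k)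
  rw [sub_sub, ← Real.log_mul (a_pos _).ne' (a_pos _).ne', ← Real.log_div (a_pos _).ne' hpos.ne',
    abs_le]
  constructor
  · have : (1 : ℝ) ≤ a (k + 2) / (a (k + 1) * a k) := by rw [le_div_iff₀ hpos]; linarith
    linarith [Real.log_nonneg this, Real.log_nonneg (by norm_num : (1 : ℝ) ≤ 7)]
  · exact Real.log_le_log (div_pos (a_pos _) hpos) (by rwa [div_le_iff₀ hpos])

lemma a_succ_rpow_le (n : ℕ) : (a (n + 1) : ℝ) ^ φ⁻¹ ≤ 7 ^ φ * a n := by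
  have h₀ : |Real.log (a 1) - φ * Real.log (a 0)| ≤ Real.log 7 * φ ^ 2 := by
    rw [show a 0 = 1 by decide, show a 1 = 1 by decide]
    simp only [Int.cast_one, Real.log_one, mul_zero, sub_self, abs_zero]
    positivity
  have hu := abs_sub_goldenRatio_mul_le (u := fun k => Real.log (a k)) h₀
    abs_log_a_add_two_sub_le n
  have hlog : Real.log (a (n + 1)) * φ⁻¹ ≤ Real.log 7 * φ + Real.log (a n) := by
    have := (abs_le.1 hu).2
    rw [mul_inv_le_iff₀ Real.goldenRatio_pos]
    nlinarith [Real.goldenRatio_sq]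
  rw [Real.rpow_def_of_pos (a_pos _), Real.rpow_def_of_pos (by norm_num), ← Real.exp_log (a_pos n),
    ← Real.exp_add]
  exact Real.exp_le_exp.2 hlog

section

variable {ξ : ℝ}

lemma abs_a_mul_sub_b_le (hξ : ∀ n, ξ ∈ I (n + 1)) (n : ℕ) :
    |a (n + 1) * ξ - b (n + 1)| ≤ 2 / a (n + 1) := by
  have ha := a_pos (n + 1)
  have hb := b_pos n
  have hab : (a (n + 1) : ℝ) ≤ 2 * b (n + 1) := by exact_mod_cast a_le_two_mul_b n
  calc |a (n + 1) * ξ - b (n + 1)| = a (n + 1) * |ξ - b (n + 1) / a (n + 1)| := by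
        rw [← abs_of_pos ha, ← abs_mul, abs_of_pos ha, mul_sub, mul_div_cancel₀ _ ha.ne']
    _ ≤ a (n + 1) * (1 / (a (n + 1) * b (n + 1))) := by
        gcongr; exact abs_sub_le_of_mem_I (hξ n) left_mem_uIcc
    _ = 1 / b (n + 1) := by field_simp
    _ ≤ 2 / a (n + 1) := by rw [div_le_div_iff₀ hb ha]; linarith

lemma abs_b_mul_sub_c_le (hξ : ∀ n, ξ ∈ I (n + 1)) (n : ℕ) :
    |b (n + 1) * ξ - c (n + 1)| ≤ 1 / a (n + 1) := by
  have ha := a_pos (n + 1)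
  have hb := b_pos n
  calc |b (n + 1) * ξ - c (n + 1)| = b (n + 1) * |ξ - c (n + 1) / b (n + 1)| := by
        rw [← abs_of_pos hb, ← abs_mul, abs_of_pos hb, mul_sub, mul_div_cancel₀ _ hb.ne']
    _ ≤ b (n + 1) * (1 / (a (n + 1) * b (n + 1))) := by
        gcongr; exact abs_sub_le_of_mem_I (hξ n) right_mem_uIcc
    _ = 1 / a (n + 1) := by field_simp

lemma abs_a_mul_sq_sub_c_le (hξ : ∀ n, ξ ∈ I (n + 1)) (n : ℕ) :
    |a (n + 1) * ξ ^ 2 - c (n + 1)| ≤ 3 / a (n + 1) := by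
  have h01 : ξ ∈ Icc 0 1 := I_one ▸ hξ 0
  have hξ1 : |ξ| ≤ 1 := abs_le.2 ⟨by linarith [h01.1], h01.2⟩
  calc |a (n + 1) * ξ ^ 2 - c (n + 1)|
      = |ξ * (a (n + 1) * ξ - b (n + 1)) + (b (n + 1) * ξ - c (n + 1))| := by ring_nf
    _ ≤ |ξ| * |a (n + 1) * ξ - b (n + 1)| + |b (n + 1) * ξ - c (n + 1)| := by
        rw [← abs_mul]; exact abs_add_le _ _
    _ ≤ 1 * (2 / a (n + 1)) + 1 / a (n + 1) := by
        gcongr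
        · exact abs_a_mul_sub_b_le hξ n
        · exact abs_b_mul_sub_c_le hξ n
    _ = 3 / a (n + 1) := by ring

/-- The left-hand side is an integer of absolute value at most `(2 |q| + 3 |r|) / a`. -/
lemma mul_a_add_mul_b_add_mul_c_eq_zero (hξ : ∀ n, ξ ∈ I (n + 1)) {p q r : ℤ}
    (h : (p : ℝ) + q * ξ + r * ξ ^ 2 = 0) {n : ℕ} (hn : 2 * |q| + 3 * |r| < a (n + 1)) :
    p * a (n + 1) + q * b (n + 1) + r * c (n + 1) = 0 := by
  have ha := a_pos (n + 1)
  have hL : ((p * a (n + 1) + q * b (n + 1) + r * c (n + 1) : ℤ) : ℝ) =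
      -(q * (a (n + 1) * ξ - b (n + 1))) - r * (a (n + 1) * ξ ^ 2 - c (n + 1)) := by
    push_cast
    linear_combination (a (n + 1) : ℝ) * h
  have hlt : |((p * a (n + 1) + q * b (n + 1) + r * c (n + 1) : ℤ) : ℝ)| < 1 := by
    calc _ ≤ |(q : ℝ)| * |a (n + 1) * ξ - b (n + 1)| +
          |(r : ℝ)| * |a (n + 1) * ξ ^ 2 - c (n + 1)| := by
          rw [hL, ← abs_mul, ← abs_mul, ← abs_neg (q * _ : ℝ)]; exact abs_sub _ _
      _ ≤ |(q : ℝ)| * (2 / a (n + 1)) + |(r : ℝ)| * (3 / a (n + 1)) := by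
          gcongr
          · exact abs_a_mul_sub_b_le hξ n
          · exact abs_a_mul_sq_sub_c_le hξ n
      _ = ((2 * |q| + 3 * |r| : ℤ) : ℝ) / a (n + 1) := by push_cast; ring
      _ < 1 := by rw [div_lt_one ha]; exact_mod_cast hn
  exact Int.abs_lt_one_iff.1 (by exact_mod_cast hlt)

lemma linearIndependent_int (hξ : ∀ n, ξ ∈ I (n + 1)) :
    LinearIndependent ℤ ![(1 : ℝ), ξ, ξ ^ 2] := by
  rw [Fintype.linearIndependent_iff]
  intro g hg
  simp only [Fin.sum_univ_three, cons_val_zero, cons_val_one, cons_val_two, zsmul_eq_mul,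
    mul_one] at hg
  set N := (2 * |g 1| + 3 * |g 2|).toNat
  have hrel (k : ℕ) : g 0 * a (N + k + 1) + g 1 * b (N + k + 1) + g 2 * c (N + k + 1) = 0 := by
    refine mul_a_add_mul_b_add_mul_c_eq_zero hξ hg ?_
    have := le_a (N + k + 1)
    push_cast at this
    omega
  have hv : triples (N + 1) *ᵥ g = 0 := by
    ext i
    fin_cases i <;>
      simp only [mulVec, dotProduct, triples, of_apply, Fin.sum_univ_three, cons_val',
        cons_val_fin_one, cons_val_zero, cons_val_one, cons_val, Pi.zero_apply, Fin.isValue,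
        Fin.zero_eta, Fin.mk_one, Fin.reduceFinMk] <;>
      linarith [hrel 0, hrel 1, hrel 2]
  exact congrFun (eq_zero_of_mulVec_eq_zero (isUnit_det_triples _).ne_zero hv)

lemma exists_approx (hξ : ∀ n, ξ ∈ I (n + 1)) {X : ℝ} (hX : 1 ≤ X) :
    ∃ n, (a (n + 1) : ℝ) ≤ X ∧
      |a (n + 1) * ξ - b (n + 1)| ≤ 3 * 7 ^ φ * X ^ (-1 / φ) ∧
      |a (n + 1) * ξ ^ 2 - c (n + 1)| ≤ 3 * 7 ^ φ * X ^ (-1 / φ) := by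
  obtain ⟨n, hle, hlt⟩ := exists_le_lt_succ (f := fun k => (a (k + 1) : ℝ))
    (by simpa [a, W] using hX) ⟨⌈X⌉₊, by
      have := le_a (⌈X⌉₊ + 1)
      have : (⌈X⌉₊ + 1 : ℝ) ≤ a (⌈X⌉₊ + 1) := by exact_mod_cast this
      linarith [Nat.le_ceil X]⟩
  have ha := a_pos (n + 1)
  have hX₀ : 0 < X := by linarith
  have hbound : 3 / a (n + 1) ≤ 3 * 7 ^ φ * X ^ (-1 / φ) := by
    have hgrowth : X ^ φ⁻¹ ≤ 7 ^ φ * a (n + 1) :=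
      (Real.rpow_le_rpow hX₀.le hlt.le (by positivity)).trans (a_succ_rpow_le (n + 1))
    calc 3 / (a (n + 1) : ℝ) = 3 * 7 ^ φ / (7 ^ φ * a (n + 1)) := by field_simp
      _ ≤ 3 * 7 ^ φ / X ^ φ⁻¹ := by gcongr
      _ = 3 * 7 ^ φ * X ^ (-1 / φ) := by
        rw [neg_div, one_div, Real.rpow_neg hX₀.le, div_eq_mul_inv]
  refine ⟨n, hle, ?_, (abs_a_mul_sq_sub_c_le hξ n).trans hbound⟩
  exact (abs_a_mul_sub_b_le hξ n).trans ((div_le_div_of_nonneg_right (by norm_num) ha.le).trans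
    hbound)

end

end RoyExtremal

lemma exists_eq_add_mul_of_mem_adjoin {K L : Type*} [Field K] [Field L] [Algebra K L] {θ : L}
    {d : K} (hθ : θ ^ 2 = algebraMap K L d) {z : L} (hz : z ∈ K⟮θ⟯) :
    ∃ p q : K, z = algebraMap K L p + algebraMap K L q * θ := by
  have hint : IsIntegral K θ := ⟨Polynomial.X ^ 2 - Polynomial.C d,
    Polynomial.monic_X_pow_sub_C d two_ne_zero, by simp [hθ]⟩
  rw [← mem_toSubalgebra, adjoin_simple_toSubalgebra_of_isAlgebraic hint.isAlgebraic] at hz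
  induction hz using Algebra.adjoin_induction with
  | mem x hx => exact ⟨0, 1, by simp [Set.mem_singleton_iff.1 hx]⟩
  | algebraMap r => exact ⟨r, 0, by simp⟩
  | add x y _ _ hx hy =>
    obtain ⟨p₁, q₁, rfl⟩ := hx
    obtain ⟨p₂, q₂, rfl⟩ := hy
    exact ⟨p₁ + p₂, q₁ + q₂, by simp only [map_add]; ring⟩
  | mul x y _ _ hx hy =>
    obtain ⟨p₁, q₁, rfl⟩ := hx
    obtain ⟨p₂, q₂, rfl⟩ := hy
    refine ⟨p₁ * p₂ + d * (q₁ * q₂), p₁ * q₂ + q₁ * p₂, ?_⟩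
    simp only [map_add, map_mul]
    linear_combination (algebraMap K L q₁ * algebraMap K L q₂) * hθ

lemma linearIndependent_ofReal_of_sq_eq {ι : Type*} [Fintype ι] {v : ι → ℝ}
    (hv : LinearIndependent ℚ v) {θ : ℂ} {d : ℚ} (hθ : θ ^ 2 = d) (hre : θ.re = 0) :
    LinearIndependent ℚ⟮θ⟯ (fun i => (v i : ℂ)) := by
  rw [Fintype.linearIndependent_iff] at hv ⊢
  intro g hg
  choose p q hpq using fun i =>
    exists_eq_add_mul_of_mem_adjoin (K := ℚ) (d := d) (by simpa using hθ) (g i).2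
  set x := ∑ i, p i • v i
  set y := ∑ i, q i • v i
  have hxy : (x : ℂ) + θ * y = 0 := by
    rw [← hg]
    simp only [x, y, Complex.ofReal_sum, Finset.mul_sum, ← Finset.sum_add_distrib]
    refine Finset.sum_congr rfl fun i _ => ?_
    change _ = (g i : ℂ) * v i
    simp only [hpq, Rat.smul_def, Complex.ofReal_mul, Complex.ofReal_ratCast, eq_ratCast]
    ring
  have hx : x = 0 := by simpa [hre] using congrArg Complex.re hxy
  have hp := hv p hx
  intro i
  rw [← Subtype.coe_inj, hpq, hp, map_zero, zero_add]
  have : θ = 0 ∨ y = 0 := by simpa [hx] using hxy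
  rcases this with hθ₀ | hy
  · simp [hθ₀]
  · simp [hv q hy i]

lemma sqrt_five_mul_I_sq : ((Real.sqrt 5 : ℂ) * Complex.I) ^ 2 = ((-5 : ℚ) : ℂ) := by
  rw [mul_pow, ← Complex.ofReal_pow, Real.sq_sqrt (by norm_num), Complex.I_sq]
  push_cast
  ring

lemma zsqrtd5ToComplex_mk_zero (m : ℤ) : zsqrtd5ToComplex ⟨m, 0⟩ = ((m : ℝ) : ℂ) := by
  simp [zsqrtd5ToComplex]

open RoyExtremal in
/-- **Extremal complex numbers over `ℤ[√-5]`.** There exist `ξ ∈ ℂ` with `1, ξ, ξ²`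
linearly independent over `ℚ(√-5)`, and a constant `c > 0` such that, for every
sufficiently large real `X`, there is a nonzero triple `(x₀, x₁, x₂) ∈ ℤ[√-5]³` with
`|x₀| ≤ X` and `max (|x₀ξ - x₁|, |x₀ξ² - x₂|) ≤ c X^(-1/γ)`. -/
theorem extremal_zsqrtd5 :
    ∃ ξ : ℂ,
      LinearIndependent ℚ⟮((Real.sqrt 5 : ℂ) * Complex.I)⟯ ![(1 : ℂ), ξ, ξ ^ 2] ∧
      ∃ c : ℝ, 0 < c ∧ ∃ X₀ : ℝ, ∀ X : ℝ, X₀ ≤ X →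
        ∃ x : Fin 3 → ℤ√(-5), x ≠ 0 ∧
          ‖zsqrtd5ToComplex (x 0)‖ ≤ X ∧
          max ‖zsqrtd5ToComplex (x 0) * ξ - zsqrtd5ToComplex (x 1)‖
              ‖zsqrtd5ToComplex (x 0) * ξ ^ 2 - zsqrtd5ToComplex (x 2)‖
            ≤ c * X ^ (-1 / Real.goldenRatio) := by
  obtain ⟨ξ, hξ⟩ := exists_forall_mem_I
  refine ⟨ξ, ?_, 3 * 7 ^ φ, by positivity, 1, fun X hX => ?_⟩
  · have hℚ := (LinearIndependent.iff_fractionRing ℤ ℚ).1 (linearIndependent_int hξ)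
    convert linearIndependent_ofReal_of_sq_eq hℚ sqrt_five_mul_I_sq (by simp) using 1
    ext i
    fin_cases i <;> simp
  · obtain ⟨n, hle, h₁, h₂⟩ := exists_approx hξ hX
    refine ⟨![⟨a (n + 1), 0⟩, ⟨b (n + 1), 0⟩, ⟨c (n + 1), 0⟩], fun h => ?_, ?_, ?_⟩
    · have := congrArg Zsqrtd.re (congrFun h 0)
      simp only [cons_val_zero, Pi.zero_apply, Zsqrtd.re_zero] at this
      linarith [one_le_a (n + 1)]
    · simp only [cons_val_zero, zsqrtd5ToComplex_mk_zero, Complex.norm_real, Real.norm_eq_abs]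
      rwa [abs_of_pos (a_pos _)]
    · simp only [cons_val_zero, cons_val_one, cons_val_two, tail_cons, head_cons,
        zsqrtd5ToComplex_mk_zero]
      rw [← Complex.ofReal_mul, ← Complex.ofReal_pow, ← Complex.ofReal_mul, ← Complex.ofReal_sub,
        ← Complex.ofReal_sub, Complex.norm_real, Complex.norm_real]
      exact max_le h₁ h₂
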